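/- Let (Λ, d) be a source-free k-graph with v ∈ Λ⁰ a sink. Let Λ_S⁰ = {w ∈ Λ⁰ : w ≰ v} and Λ_S¹ = Λ¹ \ {f ∈ Λ¹ : r(f) ≤ v}, with range, source, and degree inherited from Λ, and equivalence relation μ ∼_S λ iff ι(μ) ∼ ι(λ) in Λ. Then Λ_S := G_S*/∼_S is a source-free k-graph. -/

import Mathlib

open scoped Classical

/-- A `k`-colored directed graph: vertices, edges, range, source, and a color
(degree) in `Fin k` for each edge. -/
structure ColoredGraph (k : ℕ) where
  V : Type
  E : Type
  src : E → V
  rng : E → V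
  color : E → Fin k

namespace ColoredGraph

variable {k : ℕ}

/-- A list of edges (listed from the source end) is composable starting at `v`. -/
def Composable (G : ColoredGraph k) : G.V → List G.E → Prop
  | _, [] => True
  | v, e :: l => G.src e = v ∧ Composable G (G.rng e) l

/-- The final vertex reached by following a list of edges starting at `v`. -/
def endV (G : ColoredGraph k) : G.V → List G.E → G.V
  | v, [] => v
  | _, e :: l => endV G (G.rng e) l

/-- A finite path in `G` : an element of the path category `G*`.  The edges are
listed starting from the source (so the first edge of the list is the first,
innermost, edge of the path). -/
structure GPath (G : ColoredGraph k) where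
  src : G.V
  edges : List G.E
  comp : G.Composable src edges

namespace GPath

variable {G : ColoredGraph k}

/-- The range of a path. -/
def rng (p : GPath G) : G.V := G.endV p.src p.edges

/-- The color order of a path: the list of colors of its edges, starting from
the source end. -/
def colors (p : GPath G) : List (Fin k) := p.edges.map G.color

/-- The degree of a path, as an element of `ℕ^k`. -/
def deg (p : GPath G) : Fin k → ℕ := fun i => p.colors.count i

end GPath

theorem composable_append {G : ColoredGraph k} :
    ∀ (l₁ : List G.E) (v : G.V) (l₂ : List G.E),
      G.Composable v l₁ → G.Composable (G.endV v l₁) l₂ → G.Composable v (l₁ ++ l₂) := by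
  intro l₁
  induction l₁ with
  | nil => intro v l₂ _ h₂; exact h₂
  | cons e l ih => intro v l₂ h₁ h₂; exact ⟨h₁.1, ih (G.rng e) l₂ h₁.2 h₂⟩

theorem endV_append {G : ColoredGraph k} :
    ∀ (l₁ : List G.E) (v : G.V) (l₂ : List G.E),
      G.endV v (l₁ ++ l₂) = G.endV (G.endV v l₁) l₂ := by
  intro l₁
  induction l₁ with
  | nil => intro v l₂; rfl
  | cons e l ih => intro v l₂; exact ih (G.rng e) l₂

/-- Concatenation of composable paths. -/
def GPath.append {G : ColoredGraph k} (p q : GPath G) (h : p.rng = q.src) : GPath G :=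
  ⟨p.src, p.edges ++ q.edges,
    composable_append p.edges p.src q.edges p.comp
      (by rw [show G.endV p.src p.edges = q.src from h]; exact q.comp)⟩

/-- The path consisting of a single edge. -/
def edgePath (G : ColoredGraph k) (e : G.E) : GPath G :=
  ⟨G.src e, [e], by exact ⟨rfl, True.intro⟩⟩

/-- The relation preserves range, source and degree. -/
def PreservesRSD (G : ColoredGraph k) (rel : GPath G → GPath G → Prop) : Prop :=
  ∀ p q : GPath G, rel p q → p.src = q.src ∧ p.rng = q.rng ∧ p.deg = q.deg

/-- (KG0): the relation respects concatenation of paths. -/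
def KG0 (G : ColoredGraph k) (rel : GPath G → GPath G → Prop) : Prop :=
  ∀ (p₁ p₂ q₁ q₂ : GPath G) (h : p₁.rng = p₂.src) (h' : q₁.rng = q₂.src),
    rel p₁ q₁ → rel p₂ q₂ → rel (p₁.append p₂ h) (q₁.append q₂ h')

/-- (KG4): for each path and each permutation of its color order there is a
unique equivalent path with the permuted color order. -/
def KG4 (G : ColoredGraph k) (rel : GPath G → GPath G → Prop) : Prop :=
  ∀ (p : GPath G) (c : List (Fin k)), List.Perm c p.colors →
    ∃! q : GPath G, rel q p ∧ q.colors = c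

/-- (KG1): distinct edges are inequivalent. -/
def KG1 (G : ColoredGraph k) (rel : GPath G → GPath G → Prop) : Prop :=
  ∀ e f : G.E, rel (edgePath G e) (edgePath G f) ↔ e = f

/-- (KG2): completeness for bi-colored paths. -/
def KG2 (G : ColoredGraph k) (rel : GPath G → GPath G → Prop) : Prop :=
  ∀ (p : GPath G) (i j : Fin k), p.colors = [i, j] →
    ∃! q : GPath G, rel p q ∧ q.colors = [j, i]

/-- An equivalence relation, together with `KG0` and `KG4`, presents a `k`-graph. -/
def IsKGraphRel (G : ColoredGraph k) (rel : GPath G → GPath G → Prop) : Prop :=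
  Equivalence rel ∧ PreservesRSD G rel ∧ KG0 G rel ∧ KG4 G rel

/-- Every vertex receives an edge of every color. -/
def SourceFree (G : ColoredGraph k) : Prop :=
  ∀ (v : G.V) (i : Fin k), ∃ e : G.E, G.rng e = v ∧ G.color e = i

/-- Every vertex receives finitely many edges of each color. -/
def RowFinite (G : ColoredGraph k) : Prop :=
  ∀ (v : G.V) (i : Fin k), Set.Finite {e : G.E | G.rng e = v ∧ G.color e = i}

/-- `q` is obtained from `p` by replacing the initial (inner) two-edge subpath by
an equivalent two-edge path with transposed colors. -/
def SwapInner (G : ColoredGraph k) (rel : GPath G → GPath G → Prop) (p q : GPath G) : Prop :=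
  ∃ (a b w : GPath G) (ha : a.rng = w.src) (hb : b.rng = w.src),
    a.edges.length = 2 ∧ b.colors = a.colors.reverse ∧ rel a b ∧
    p = a.append w ha ∧ q = b.append w hb

/-- `q` is obtained from `p` by replacing the final (outer) two-edge subpath by
an equivalent two-edge path with transposed colors. -/
def SwapOuter (G : ColoredGraph k) (rel : GPath G → GPath G → Prop) (p q : GPath G) : Prop :=
  ∃ (w a b : GPath G) (ha : w.rng = a.src) (hb : w.rng = b.src),
    a.edges.length = 2 ∧ b.colors = a.colors.reverse ∧ rel a b ∧
    p = w.append a ha ∧ q = w.append b hb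

/-- (KG3): associativity. For a tri-colored path with pairwise distinct colors,
the two standard routes of successive pairwise swaps give the same result. -/
def KG3 (G : ColoredGraph k) (rel : GPath G → GPath G → Prop) : Prop :=
  ∀ (p : GPath G) (i j l : Fin k), i ≠ j → j ≠ l → i ≠ l →
    p.colors = [l, j, i] → ∀ p₁ p₂ p₃ q₁ q₂ q₃ : GPath G,
      SwapOuter G rel p p₁ → SwapInner G rel p₁ p₂ → SwapOuter G rel p₂ p₃ →
      SwapInner G rel p q₁ → SwapOuter G rel q₁ q₂ → SwapInner G rel q₂ q₃ → p₃ = q₃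

/-- `w ≤ v` : there is a path from `v` to `w` (source `v`, range `w`). -/
def LeV (G : ColoredGraph k) (v w : G.V) : Prop :=
  ∃ p : GPath G, p.src = v ∧ p.rng = w

theorem LeV_extend {G : ColoredGraph k} {v : G.V} (e : G.E)
    (h : LeV G v (G.src e)) : LeV G v (G.rng e) := by
  obtain ⟨p, hs, hr⟩ := h
  refine ⟨p.append (edgePath G e) hr, hs, ?_⟩
  show G.endV p.src (p.edges ++ [e]) = G.rng e
  exact (endV_append p.edges p.src [e]).trans rfl

/-- A complete edge from `u` to `w`: exactly one edge of each color, all with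
source `u` and range `w`, closed under commuting squares. -/
def IsCompleteEdge (G : ColoredGraph k) (rel : GPath G → GPath G → Prop)
    (E : Set G.E) (u w : G.V) : Prop :=
  (∀ i : Fin k, ∃! e : G.E, e ∈ E ∧ G.color e = i) ∧
  (∀ e ∈ E, G.src e = u ∧ G.rng e = w) ∧
  (∀ e ∈ E, ∀ a b f' : G.E, ∀ p q : GPath G,
    ((p.edges = [a, e] ∧ q.edges = [b, f']) ∨ (p.edges = [e, a] ∧ q.edges = [f', b])) →
    rel p q → f' ∈ E)

/-- A set `T` of edges of the color of `f` is closed under being opposite to a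
member in a commuting square whose other color differs from that of `f`. -/
def SqClosed (G : ColoredGraph k) (rel : GPath G → GPath G → Prop)
    (f : G.E) (T : Set G.E) : Prop :=
  ∀ g ∈ T, ∀ (e a b : G.E) (p q : GPath G),
    G.color a = G.color b → G.color a ≠ G.color f → G.color e = G.color f →
    ((p.edges = [g, a] ∧ q.edges = [b, e]) ∨ (p.edges = [a, g] ∧ q.edges = [e, b])) →
    rel p q → e ∈ T

/-- Vertices of the sink-deleted graph: the vertices `w` with `w ≰ v`. -/
abbrev SV (G : ColoredGraph k) (v : G.V) := {w : G.V // ¬ LeV G v w}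

/-- Edges of the sink-deleted graph: the edges whose range is `≰ v`. -/
abbrev SE (G : ColoredGraph k) (v : G.V) := {e : G.E // ¬ LeV G v (G.rng e)}

/-- The colored graph obtained by deleting the sink `v`: all vertices `≤ v` and
all edges with range `≤ v` are removed. -/
def SinkDelete (G : ColoredGraph k) (v : G.V) : ColoredGraph k where
  V := SV G v
  E := SE G v
  src := fun e => ⟨G.src e.1, fun h => e.2 (LeV_extend e.1 h)⟩
  rng := fun e => ⟨G.rng e.1, e.2⟩
  color := fun e => G.color e.1

/-- The equivalence relation on paths of the sink-deleted graph: paths are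
related iff their inclusions into the original graph are related. -/
def SinkRel (G : ColoredGraph k) (rel : GPath G → GPath G → Prop) (v : G.V)
    (p q : GPath (SinkDelete G v)) : Prop :=
  ∃ p' q' : GPath G,
    p'.src = p.src.1 ∧ p'.edges = p.edges.map Subtype.val ∧
    q'.src = q.src.1 ∧ q'.edges = q.edges.map Subtype.val ∧ rel p' q'

/-!
A path of `Λ` whose range is `≰ v` passes only through vertices `≰ v`, since `≤ v` is closed
under following edges; so `ι` identifies `Λ_S*` with the paths of `Λ` with range `≰ v`.
Equivalent paths have the same range, so a `∼`-class meeting `ι(Λ_S*)` lies inside it, and each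
axiom of `∼` restricts along `ι` to `∼_S`. An edge into a vertex `≰ v` is itself an edge of
`Λ_S`, which gives source-freeness.
-/

section SinkDeletion

variable {G : ColoredGraph k} {v : G.V}

theorem GPath.ext {p q : GPath G} (hsrc : p.src = q.src) (hedges : p.edges = q.edges) :
    p = q := by
  cases p; cases q; cases hsrc; cases hedges; rfl

theorem LeV.endV {w : G.V} (h : LeV G v w) :
    ∀ {l : List G.E}, G.Composable w l → LeV G v (G.endV w l)
  | [], _ => h
  | e :: _, hl => LeV.endV (LeV_extend e (hl.1 ▸ h)) hl.2

theorem LeV.endV_of_mem {e : G.E} (h : LeV G v (G.rng e)) {w : G.V} {l : List G.E}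
    (hl : G.Composable w l) (he : e ∈ l) : LeV G v (G.endV w l) := by
  induction l generalizing w with
  | nil => cases he
  | cons f l ih =>
    rcases List.mem_cons.mp he with rfl | he
    · exact h.endV hl.2
    · exact ih hl.2 he

theorem GPath.not_leV_src {p : GPath G} (hp : ¬ LeV G v p.rng) : ¬ LeV G v p.src :=
  fun h => hp (h.endV p.comp)

theorem GPath.not_leV_rng_of_mem {p : GPath G} (hp : ¬ LeV G v p.rng) {e : G.E}
    (he : e ∈ p.edges) : ¬ LeV G v (G.rng e) :=
  fun h => hp (h.endV_of_mem p.comp he)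

theorem composable_sinkDelete_iff :
    ∀ {w : SV G v} {l : List (SE G v)},
      (SinkDelete G v).Composable w l ↔ G.Composable w.1 (l.map Subtype.val)
  | _, [] => Iff.rfl
  | _, _ :: _ => and_congr Subtype.ext_iff composable_sinkDelete_iff

theorem endV_sinkDelete :
    ∀ {w : SV G v} {l : List (SE G v)},
      ((SinkDelete G v).endV w l).1 = G.endV w.1 (l.map Subtype.val)
  | _, [] => rfl
  | _, _ :: l => endV_sinkDelete (l := l)

/-- `ι : Λ_S* → Λ*`. -/
def GPath.incl (p : GPath (SinkDelete G v)) : GPath G :=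
  ⟨p.src.1, p.edges.map Subtype.val, composable_sinkDelete_iff.mp p.comp⟩

theorem GPath.incl_rng (p : GPath (SinkDelete G v)) : p.incl.rng = p.rng.1 :=
  endV_sinkDelete.symm

theorem GPath.incl_colors (p : GPath (SinkDelete G v)) : p.incl.colors = p.colors :=
  List.map_map

theorem GPath.incl_deg (p : GPath (SinkDelete G v)) : p.incl.deg = p.deg := by
  funext j
  simp only [GPath.deg, incl_colors]

theorem GPath.incl_injective :
    Function.Injective (GPath.incl : GPath (SinkDelete G v) → GPath G) := by
  intro p q h
  exact GPath.ext (Subtype.ext (congrArg GPath.src h))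
    (List.map_injective_iff.mpr Subtype.val_injective (congrArg GPath.edges h))

theorem GPath.incl_append (p q : GPath (SinkDelete G v)) (h : p.rng = q.src) :
    (p.append q h).incl = p.incl.append q.incl (by rw [incl_rng, h]; rfl) :=
  GPath.ext rfl List.map_append

def GPath.restrict (q : GPath G) (hq : ¬ LeV G v q.rng) : GPath (SinkDelete G v) :=
  ⟨⟨q.src, q.not_leV_src hq⟩, q.edges.attachWith _ (fun _ => q.not_leV_rng_of_mem hq),
    composable_sinkDelete_iff.mpr (by rw [List.attachWith_map_subtype_val]; exact q.comp)⟩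

theorem GPath.incl_restrict (q : GPath G) (hq : ¬ LeV G v q.rng) : (q.restrict hq).incl = q :=
  GPath.ext rfl (List.attachWith_map_subtype_val _)

variable {rel : GPath G → GPath G → Prop}

theorem sinkRel_iff {p q : GPath (SinkDelete G v)} : SinkRel G rel v p q ↔ rel p.incl q.incl :=
  ⟨fun ⟨p', q', hp₁, hp₂, hq₁, hq₂, h⟩ => by
      obtain rfl : p' = p.incl := GPath.ext hp₁ hp₂
      obtain rfl : q' = q.incl := GPath.ext hq₁ hq₂
      exact h,
    fun h => ⟨_, _, rfl, rfl, rfl, rfl, h⟩⟩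

theorem sinkRel_eq_onFun_incl :
    SinkRel G rel v = Function.onFun rel (GPath.incl : GPath (SinkDelete G v) → GPath G) := by
  funext p q
  exact propext sinkRel_iff

theorem exists_incl_eq_of_rel (hRSD : PreservesRSD G rel) {p : GPath (SinkDelete G v)}
    {q : GPath G} (h : rel q p.incl) : ∃ q' : GPath (SinkDelete G v), q'.incl = q := by
  have hq : ¬ LeV G v q.rng := by
    rw [(hRSD _ _ h).2.1, GPath.incl_rng]
    exact p.rng.2
  exact ⟨q.restrict hq, q.incl_restrict hq⟩

theorem equivalence_sinkRel (hEq : Equivalence rel) : Equivalence (SinkRel G rel v) :=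
  sinkRel_eq_onFun_incl ▸ hEq.comap _

theorem preservesRSD_sinkRel (hRSD : PreservesRSD G rel) :
    PreservesRSD (SinkDelete G v) (SinkRel G rel v) := by
  intro p q h
  obtain ⟨hsrc, hrng, hdeg⟩ := hRSD _ _ (sinkRel_iff.mp h)
  refine ⟨Subtype.ext hsrc, Subtype.ext ?_, ?_⟩
  · rw [← GPath.incl_rng, ← GPath.incl_rng, hrng]
  · rw [← GPath.incl_deg, ← GPath.incl_deg, hdeg]

theorem kg0_sinkRel (hKG0 : KG0 G rel) : KG0 (SinkDelete G v) (SinkRel G rel v) := by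
  intro p₁ p₂ q₁ q₂ h h' h₁ h₂
  rw [sinkRel_iff, GPath.incl_append, GPath.incl_append]
  exact hKG0 _ _ _ _ _ _ (sinkRel_iff.mp h₁) (sinkRel_iff.mp h₂)

theorem kg4_sinkRel (hRSD : PreservesRSD G rel) (hKG4 : KG4 G rel) :
    KG4 (SinkDelete G v) (SinkRel G rel v) := by
  intro p c hc
  rw [← GPath.incl_colors] at hc
  obtain ⟨q, ⟨hrel, hcolors⟩, huniq⟩ := hKG4 p.incl c hc
  obtain ⟨q, rfl⟩ := exists_incl_eq_of_rel hRSD hrel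
  refine ⟨q, ⟨sinkRel_iff.mpr hrel, GPath.incl_colors q ▸ hcolors⟩, ?_⟩
  rintro r ⟨hr, hrc⟩
  exact GPath.incl_injective
    (huniq r.incl ⟨sinkRel_iff.mp hr, (GPath.incl_colors r).trans hrc⟩)

theorem sourceFree_sinkDelete (hsf : SourceFree G) : SourceFree (SinkDelete G v) := by
  intro w j
  obtain ⟨e, hrng, hcolor⟩ := hsf w.1 j
  exact ⟨⟨e, hrng ▸ w.2⟩, Subtype.ext hrng, hcolor⟩

end SinkDeletion

theorem sinkdelete_is_kgraph_general {k : ℕ} (G : ColoredGraph k) (rel : GPath G → GPath G → Prop)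
    (hK : IsKGraphRel G rel) (hsf : SourceFree G)
    (v : G.V) :
    IsKGraphRel (SinkDelete G v) (SinkRel G rel v) ∧ SourceFree (SinkDelete G v) := by
  obtain ⟨hEq, hRSD, hKG0, hKG4⟩ := hK
  exact ⟨⟨equivalence_sinkRel hEq, preservesRSD_sinkRel hRSD, kg0_sinkRel hKG0,
    kg4_sinkRel hRSD hKG4⟩, sourceFree_sinkDelete hsf⟩

/-- Deleting a sink from a source-free `k`-graph yields a source-free
`k`-graph. -/
theorem sinkdelete_is_kgraph {k : ℕ} (G : ColoredGraph k) (rel : GPath G → GPath G → Prop)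
    (hK : IsKGraphRel G rel) (hsf : SourceFree G)
    (v : G.V) (i : Fin k) (hsink : ∀ e : G.E, G.src e = v → G.color e ≠ i) :
    IsKGraphRel (SinkDelete G v) (SinkRel G rel v) ∧ SourceFree (SinkDelete G v) :=
  sinkdelete_is_kgraph_general G rel hK hsf v

end ColoredGraph
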